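/- There exist transcendental entire functions f and g generating a non-trivial transcendental semigroup S = ⟨f, g⟩, and a simply connected domain D, such that D ⊆ F(S) and, for every h ∈ S, D lies in a pre-periodic component of F(h). -/

import Mathlib

open Complex Filter Topology

/-- A transcendental entire function: complex-differentiable on all of `ℂ` and
not equal to (the evaluation of) any polynomial. -/
def TranscendentalEntire (f : ℂ → ℂ) : Prop :=
  Differentiable ℂ f ∧ ¬ ∃ p : Polynomial ℂ, ∀ z : ℂ, f z = p.eval z

/-- A family `𝔉` of functions is normal on a set `U ⊆ ℂ`: every sequence of members of `𝔉`
has a subsequence that either converges locally uniformly on `U` to a limit function, or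
diverges to `∞` uniformly on every compact subset of `U`. -/
def NormalOn (𝔉 : Set (ℂ → ℂ)) (U : Set ℂ) : Prop :=
  ∀ s : ℕ → ℂ → ℂ, (∀ n, s n ∈ 𝔉) →
    ∃ φ : ℕ → ℕ, StrictMono φ ∧
      ((∃ g : ℂ → ℂ, TendstoLocallyUniformlyOn (fun n => s (φ n)) g atTop U) ∨
       (∀ K : Set ℂ, K ⊆ U → IsCompact K →
          ∀ M : ℝ, ∀ᶠ n in atTop, ∀ z ∈ K, M ≤ ‖s (φ n) z‖))

/-- The Fatou set of a family of functions: points having an open neighborhood on which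
the family is normal. -/
def fatouSetOfFamily (𝔉 : Set (ℂ → ℂ)) : Set ℂ :=
  {z | ∃ U : Set ℂ, IsOpen U ∧ z ∈ U ∧ NormalOn 𝔉 U}

/-- The family of (positive) iterates of a function. -/
def iteratesOf (f : ℂ → ℂ) : Set (ℂ → ℂ) := {g | ∃ n : ℕ, 0 < n ∧ g = f^[n]}

/-- The Fatou set of a single function `f`: points near which the family of iterates of `f`
is normal. -/
def fatouSet (f : ℂ → ℂ) : Set ℂ := fatouSetOfFamily (iteratesOf f)

/-- `U` is a Fatou component of `f`: a connected component of the Fatou set of `f`. -/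
def IsFatouComponent (f : ℂ → ℂ) (U : Set ℂ) : Prop :=
  ∃ z ∈ fatouSet f, U = connectedComponentIn (fatouSet f) z

/-- `U` is a periodic Fatou component of `f`: some iterate maps `U` back into `U`
(i.e. `Uₙ = U` for some `n ≥ 1`). -/
def IsPeriodicComponent (f : ℂ → ℂ) (U : Set ℂ) : Prop :=
  IsFatouComponent f U ∧ ∃ n : ℕ, 0 < n ∧ f^[n] '' U ⊆ U

/-- `U` is a pre-periodic Fatou component of `f`: `Uₙ = Uₘ` for some `n > m ≥ 0`,
i.e. `fⁿ(U)` and `fᵐ(U)` lie in the same Fatou component. -/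
def IsPreperiodicComponent (f : ℂ → ℂ) (U : Set ℂ) : Prop :=
  IsFatouComponent f U ∧ ∃ n m : ℕ, m < n ∧ ∀ z ∈ U,
    connectedComponentIn (fatouSet f) (f^[n] z) = connectedComponentIn (fatouSet f) (f^[m] z)

/-- `U` is a wandering Fatou component of `f`: a Fatou component that is not pre-periodic. -/
def IsWanderingComponent (f : ℂ → ℂ) (U : Set ℂ) : Prop :=
  IsFatouComponent f U ∧ ¬ ∃ n m : ℕ, m < n ∧ ∀ z ∈ U,
    connectedComponentIn (fatouSet f) (f^[n] z) = connectedComponentIn (fatouSet f) (f^[m] z)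

/-- A (plane) domain: a nonempty open connected subset of `ℂ`. -/
def IsPlaneDomain (D : Set ℂ) : Prop := IsOpen D ∧ IsConnected D

/-- `D` lies in a wandering component of the Fatou set of `f`. -/
def LiesInWanderingComponent (f : ℂ → ℂ) (D : Set ℂ) : Prop :=
  ∃ U : Set ℂ, IsWanderingComponent f U ∧ D ⊆ U

/-- `D` lies in a pre-periodic component of the Fatou set of `f`. -/
def LiesInPreperiodicComponent (f : ℂ → ℂ) (D : Set ℂ) : Prop :=
  ∃ U : Set ℂ, IsPreperiodicComponent f U ∧ D ⊆ U

/-- `D` lies in a periodic component of the Fatou set of `f`. -/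
def LiesInPeriodicComponent (f : ℂ → ℂ) (D : Set ℂ) : Prop :=
  ∃ U : Set ℂ, IsPeriodicComponent f U ∧ D ⊆ U

/-- Membership in the semigroup (under composition) generated by a set `A` of functions. -/
inductive InSemigroup (A : Set (ℂ → ℂ)) : (ℂ → ℂ) → Prop
  | base : ∀ {f}, f ∈ A → InSemigroup A f
  | comp : ∀ {f g}, InSemigroup A f → InSemigroup A g → InSemigroup A (f ∘ g)

/-- The semigroup generated by a set of functions. -/
def semigroupGen (A : Set (ℂ → ℂ)) : Set (ℂ → ℂ) := {h | InSemigroup A h}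

/-- A semigroup of functions is trivial (cyclic) if it is of the form `{φⁿ : n ≥ 1}`
for a single function `φ`. -/
def IsTrivialSemigroup (S : Set (ℂ → ℂ)) : Prop :=
  ∃ φ : ℂ → ℂ, S = iteratesOf φ

/-!
Take `f z = z + 1 + exp (-z)` and `g z = z + 2 + exp (-z)`. On the half-plane `H = {1 < re z}`
we have `|re (exp (-z))| ≤ exp (-1) < 1/2`, so each generator moves `re z` to the right by
between `1/2` and `3`, and a composition of `n` generators by between `n/2` and `3n`. Hence only
finitely many elements `h` of the semigroup keep `re (h 2)` below a given bound, and every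
sequence in the semigroup either repeats one element infinitely often or tends to `∞`
uniformly on `H`: the semigroup is normal on `H`, and so is the family of iterates of any of its
elements `h`. Since `h` is a nonconstant entire function it is an open map, so it maps its Fatou
set into itself; as `h(H) ⊆ H`, it maps the Fatou component containing `H` into itself. Finally
`f` and `g` do not commute, so the semigroup is not cyclic.
-/

open Set Function Polynomial

theorem NormalOn.mono {𝔉 𝔊 : Set (ℂ → ℂ)} {U : Set ℂ} (h𝔊 : NormalOn 𝔊 U) (h : 𝔉 ⊆ 𝔊) :
    NormalOn 𝔉 U :=
  fun s hs => h𝔊 s fun n => h (hs n)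

theorem IsCompact.eventually_forall_of_forall_exists_mem_nhds {X ι : Type*} [TopologicalSpace X]
    {l : Filter ι} {K : Set X} (hK : IsCompact K) {P : ι → X → Prop}
    (hP : ∀ x ∈ K, ∃ t ∈ 𝓝 x, ∀ᶠ n in l, ∀ y ∈ t, P n y) : ∀ᶠ n in l, ∀ y ∈ K, P n y := by
  refine hK.induction_on (p := fun s => ∀ᶠ n in l, ∀ y ∈ s, P n y) (by simp)
    (fun s t hst ht => ht.mono fun n hn y hy => hn y (hst hy))
    (fun s t hs ht => (hs.and ht).mono fun n hn y hy => hy.elim (hn.1 y) (hn.2 y)) ?_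
  intro x hx
  obtain ⟨t, ht, hPt⟩ := hP x hx
  exact ⟨t, mem_nhdsWithin_of_mem_nhds ht, hPt⟩

section OpenMap

variable {X Y Z ι : Type*} [TopologicalSpace X] [TopologicalSpace Y] {h : X → Y} {V : Set X}
  {l : Filter ι}

theorem TendstoLocallyUniformlyOn.of_comp_isOpenMap [UniformSpace Z] [T2Space Z] [Nonempty Z]
    [l.NeBot] {F : ι → Y → Z} {g : X → Z} (hh : IsOpenMap h) (hV : IsOpen V)
    (hF : TendstoLocallyUniformlyOn (fun n => F n ∘ h) g l V) :
    ∃ G : Y → Z, TendstoLocallyUniformlyOn F G l (h '' V) := by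
  refine ⟨fun y => limUnder l fun n => F n y, ?_⟩
  rintro u hu _ ⟨x, hx, rfl⟩
  obtain ⟨t, ht, hFt⟩ := hF u hu x hx
  obtain ⟨O, hO, hxO, hOt⟩ := mem_nhdsWithin.mp ht
  refine ⟨h '' (O ∩ V), mem_nhdsWithin_of_mem_nhds
    ((hh _ (hO.inter hV)).mem_nhds ⟨x, ⟨hxO, hx⟩, rfl⟩), ?_⟩
  filter_upwards [hFt] with n hn
  rintro _ ⟨w, hw, rfl⟩
  rw [show limUnder l (fun n => F n (h w)) = g w from (hF.tendsto_at hw.2).limUnder_eq]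
  exact hn w (hOt hw)

theorem eventually_forall_le_norm_of_comp_isOpenMap [LocallyCompactSpace X] [Norm Z]
    {F : ι → Y → Z} (hh : IsOpenMap h) (hV : IsOpen V)
    (hF : ∀ K ⊆ V, IsCompact K → ∀ M : ℝ, ∀ᶠ n in l, ∀ z ∈ K, M ≤ ‖F n (h z)‖) :
    ∀ K ⊆ h '' V, IsCompact K → ∀ M : ℝ, ∀ᶠ n in l, ∀ z ∈ K, M ≤ ‖F n z‖ := by
  refine fun K hKV hK M => hK.eventually_forall_of_forall_exists_mem_nhds fun y hy => ?_
  obtain ⟨x, hx, rfl⟩ := hKV hy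
  obtain ⟨C, hxC, hCV, hC⟩ := local_compact_nhds (hV.mem_nhds hx)
  exact ⟨h '' C, hh.image_mem_nhds hxC,
    (hF C hCV hC M).mono fun n hn _ ⟨z, hz, hzy⟩ => hzy ▸ hn z hz⟩

end OpenMap

theorem NormalOn.image_of_comp {𝔉 : Set (ℂ → ℂ)} {h : ℂ → ℂ} {V : Set ℂ} (hh : IsOpenMap h)
    (hV : IsOpen V) (hN : NormalOn ((· ∘ h) '' 𝔉) V) : NormalOn 𝔉 (h '' V) := by
  intro s hs
  obtain ⟨φ, hφ, hconv | hdiv⟩ := hN (fun n => s n ∘ h) fun n => mem_image_of_mem _ (hs n)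
  · exact ⟨φ, hφ, Or.inl (hconv.elim fun g hg => hg.of_comp_isOpenMap hh hV)⟩
  · exact ⟨φ, hφ, Or.inr (eventually_forall_le_norm_of_comp_isOpenMap hh hV hdiv)⟩

theorem mapsTo_fatouSet {h : ℂ → ℂ} (hh : IsOpenMap h) : MapsTo h (fatouSet h) (fatouSet h) := by
  rintro z ⟨V, hV, hzV, hN⟩
  refine ⟨h '' V, hh V hV, mem_image_of_mem h hzV, NormalOn.image_of_comp hh hV (hN.mono ?_)⟩
  rintro _ ⟨_, ⟨n, hn, rfl⟩, rfl⟩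
  exact ⟨n + 1, n.succ_pos, (iterate_succ h n).symm⟩

theorem liesInPreperiodicComponent_of_mapsTo {h : ℂ → ℂ} (hc : Continuous h) (hh : IsOpenMap h)
    {P : Set ℂ} (hP : IsPreconnected P) (hne : P.Nonempty) (hPF : P ⊆ fatouSet h)
    (hPh : MapsTo h P P) : LiesInPreperiodicComponent h P := by
  obtain ⟨x, hx⟩ := hne
  set W := connectedComponentIn (fatouSet h) x with hW_def
  have hPW : P ⊆ W := hP.subset_connectedComponentIn hx hPF
  have hW : MapsTo h W W := by
    intro z hz
    rw [hW_def, connectedComponentIn_eq (hPW (hPh hx))]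
    exact connectedComponentIn_mono _ (mapsTo_fatouSet hh).image_subset
      (hc.continuousOn.mapsTo_connectedComponentIn (hPF hx) hz)
  refine ⟨W, ⟨⟨x, hPF hx, rfl⟩, 1, 0, one_pos, fun z hz => ?_⟩, hPW⟩
  rw [iterate_one, iterate_zero_apply, ← connectedComponentIn_eq (hW hz)]
  exact connectedComponentIn_eq hz

theorem not_isTrivialSemigroup_of_not_commute {f g : ℂ → ℂ} (hfg : ¬ Function.Commute f g) :
    ¬ IsTrivialSemigroup (semigroupGen {f, g}) := by
  rintro ⟨φ, hφ⟩
  have hf : f ∈ iteratesOf φ := hφ ▸ InSemigroup.base (mem_insert f {g})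
  have hg : g ∈ iteratesOf φ := hφ ▸ InSemigroup.base (mem_insert_of_mem f rfl)
  obtain ⟨m, -, rfl⟩ := hf
  obtain ⟨n, -, rfl⟩ := hg
  exact hfg (Function.Commute.iterate_iterate_self φ m n)

theorem iteratesOf_subset_semigroupGen {A : Set (ℂ → ℂ)} {h : ℂ → ℂ} (hh : h ∈ semigroupGen A) :
    iteratesOf h ⊆ semigroupGen A := by
  rintro _ ⟨n, hn, rfl⟩
  induction n with
  | zero => exact absurd hn (lt_irrefl 0)
  | succ n ih =>
    rcases n.eq_zero_or_pos with rfl | hn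
    · simpa using hh
    · rw [iterate_succ']
      exact InSemigroup.comp hh (ih hn)

theorem normalOn_of_finite_sublevels {𝔉 : Set (ℂ → ℂ)} {U : Set ℂ} (σ : (ℂ → ℂ) → ℝ)
    (hfin : ∀ B, {h ∈ 𝔉 | σ h ≤ B}.Finite)
    (hlarge : ∀ M : ℝ, ∃ B, ∀ h ∈ 𝔉, B ≤ σ h → ∀ z ∈ U, M ≤ ‖h z‖) : NormalOn 𝔉 U := by
  intro s hs
  by_cases hrep : ∃ h, {n | s n = h}.Infinite
  · obtain ⟨h, hinf⟩ := hrep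
    refine ⟨Nat.nth (s · = h), Nat.nth_strictMono hinf, Or.inl ⟨h, ?_⟩⟩
    simp only [Nat.nth_mem_of_infinite hinf]
    exact fun u hu _ _ => ⟨U, self_mem_nhdsWithin,
      Filter.Eventually.of_forall fun _ _ _ => refl_mem_uniformity hu⟩
  · simp only [not_exists, not_infinite] at hrep
    refine ⟨id, strictMono_id, Or.inr fun K hKU _ M => ?_⟩
    obtain ⟨B, hB⟩ := hlarge M
    have hsmall : {n | σ (s n) < B}.Finite :=
      ((hfin B).biUnion fun h _ => hrep h).subset fun n hn =>
        mem_biUnion ⟨hs n, le_of_lt hn⟩ rfl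
    filter_upwards [Nat.cofinite_eq_atTop ▸ hsmall.eventually_cofinite_notMem] with n hn z hz
    exact hB _ (hs n) (not_lt.mp hn) z (hKU hz)

theorem differentiable_of_mem_semigroupGen {A : Set (ℂ → ℂ)} (hA : ∀ f ∈ A, Differentiable ℂ f)
    {h : ℂ → ℂ} (hh : h ∈ semigroupGen A) : Differentiable ℂ h := by
  induction hh with
  | base hf => exact hA _ hf
  | comp _ _ ih₁ ih₂ => exact ih₁.comp ih₂

noncomputable section

def shiftExp (c z : ℂ) : ℂ := z + c + exp (-z)

theorem differentiable_shiftExp (c : ℂ) : Differentiable ℂ (shiftExp c) := by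
  unfold shiftExp; fun_prop

theorem transcendentalEntire_shiftExp (c : ℂ) : TranscendentalEntire (shiftExp c) := by
  refine ⟨differentiable_shiftExp c, ?_⟩
  rintro ⟨p, hp⟩
  set q := p - (X + C c)
  have hq : ∀ z, q.eval z = exp (-z) := fun z => by
    simp only [q, eval_sub, eval_add, eval_X, eval_C, ← hp, shiftExp]; ring
  have hdeg : q.degree ≤ 0 := by
    by_contra hpos
    obtain ⟨z, hz⟩ := Complex.exists_root (not_le.mp hpos)
    exact exp_ne_zero (-z) (hq z ▸ hz)
  have hq0 := hq 0
  have hq1 := hq 1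
  rw [eq_C_of_degree_le_zero hdeg, eval_C] at hq0 hq1
  have h01 := congrArg norm (hq0.symm.trans hq1)
  simp only [neg_zero, Complex.norm_exp, Complex.zero_re, Real.exp_zero, Complex.neg_re,
    Complex.one_re] at h01
  exact (Real.exp_lt_one_iff.mpr (by norm_num : (-1 : ℝ) < 0)).ne h01.symm

theorem not_commute_shiftExp_one_two : ¬ Function.Commute (shiftExp 1) (shiftExp 2) := by
  intro h
  have h0 := congrArg (‖· - 4‖) (h 0)
  simp only [shiftExp] at h0
  norm_num [Complex.norm_exp] at h0

theorem abs_re_shiftExp_sub_le (c : ℂ) {z : ℂ} (hz : 1 ≤ z.re) :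
    |(shiftExp c z).re - z.re - c.re| ≤ 1 / 2 := calc
  |(shiftExp c z).re - z.re - c.re| = |(exp (-z)).re| := by
    simp only [shiftExp, Complex.add_re]; ring_nf
  _ ≤ Real.exp (-z.re) := by simpa [Complex.norm_exp] using Complex.abs_re_le_norm (exp (-z))
  _ ≤ Real.exp (-1) := Real.exp_le_exp.mpr (neg_le_neg hz)
  _ ≤ 1 / 2 := by
    rw [Real.exp_neg, one_div]
    exact inv_anti₀ two_pos Real.exp_one_gt_two.le

namespace ShiftExp

local notation "𝒮" => semigroupGen {shiftExp 1, shiftExp 2}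

def letter (b : Bool) : ℂ → ℂ := shiftExp (bif b then 1 else 2)

def word : List Bool → ℂ → ℂ
  | [] => id
  | b :: l => letter b ∘ word l

theorem word_append (l₁ l₂ : List Bool) : word (l₁ ++ l₂) = word l₁ ∘ word l₂ := by
  induction l₁ with
  | nil => rfl
  | cons b l ih => simp only [List.cons_append, word, ih, comp_assoc]

theorem exists_word {h : ℂ → ℂ} (hh : h ∈ 𝒮) : ∃ l, h = word l := by
  induction hh with
  | base hmem =>
    rcases hmem with rfl | rfl
    exacts [⟨[true], rfl⟩, ⟨[false], rfl⟩]
  | comp _ _ ih₁ ih₂ =>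
    obtain ⟨l₁, rfl⟩ := ih₁
    obtain ⟨l₂, rfl⟩ := ih₂
    exact ⟨l₁ ++ l₂, (word_append l₁ l₂).symm⟩

theorem re_letter_bounds (b : Bool) {z : ℂ} (hz : 1 ≤ z.re) :
    z.re + 1 / 2 ≤ (letter b z).re ∧ (letter b z).re ≤ z.re + 3 := by
  have h := abs_le.mp (abs_re_shiftExp_sub_le (bif b then 1 else 2) hz)
  cases b <;> norm_num [letter] at h ⊢ <;> constructor <;> linarith [h.1, h.2]

theorem re_word_bounds (l : List Bool) {z : ℂ} (hz : 1 ≤ z.re) :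
    z.re + l.length / 2 ≤ (word l z).re ∧ (word l z).re ≤ z.re + 3 * l.length := by
  induction l with
  | nil => simp [word]
  | cons b l ih =>
    have hb := re_letter_bounds b (z := word l z)
      (by linarith [ih.1, l.length.cast_nonneg (α := ℝ)])
    simp only [word, comp_apply, List.length_cons, Nat.cast_succ]
    constructor <;> linarith [ih.1, ih.2, hb.1, hb.2]

def halfPlane : Set ℂ := {z | 1 < z.re}

theorem isOpen_halfPlane : IsOpen halfPlane := isOpen_lt continuous_const Complex.continuous_re

theorem convex_halfPlane : Convex ℝ halfPlane := convex_halfSpace_re_gt 1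

theorem two_mem_halfPlane : (2 : ℂ) ∈ halfPlane := by norm_num [halfPlane]

theorem differentiable_of_mem {h : ℂ → ℂ} (hh : h ∈ 𝒮) : Differentiable ℂ h :=
  differentiable_of_mem_semigroupGen (by simp [differentiable_shiftExp]) hh

theorem re_le_re_apply {h : ℂ → ℂ} (hh : h ∈ 𝒮) {z : ℂ} (hz : 1 ≤ z.re) : z.re ≤ (h z).re := by
  obtain ⟨l, rfl⟩ := exists_word hh
  linarith [(re_word_bounds l hz).1, l.length.cast_nonneg (α := ℝ)]

theorem mapsTo_halfPlane {h : ℂ → ℂ} (hh : h ∈ 𝒮) : MapsTo h halfPlane halfPlane :=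
  fun _ hz => hz.trans_le (re_le_re_apply hh hz.le)

theorem isOpenMap_of_mem {h : ℂ → ℂ} (hh : h ∈ 𝒮) : IsOpenMap h := by
  have hanalytic := analyticOnNhd_univ_iff_differentiable.mpr (differentiable_of_mem hh)
  refine hanalytic.is_constant_or_isOpenMap.resolve_left ?_
  rintro ⟨w, hw⟩
  have hx : 1 ≤ ((max 1 w.re + 1 : ℝ) : ℂ).re := by simp
  have := re_le_re_apply hh hx
  rw [hw, Complex.ofReal_re] at this
  linarith [le_max_right 1 w.re]

theorem finite_setOf_re_apply_two_le (B : ℝ) : {h ∈ 𝒮 | (h 2).re ≤ B}.Finite := by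
  refine ((List.finite_length_le Bool ⌈2 * B⌉₊).image word).subset ?_
  rintro h ⟨hh, hB⟩
  obtain ⟨l, rfl⟩ := exists_word hh
  have hl := (re_word_bounds l (z := 2) (by norm_num)).1
  norm_num at hl
  exact ⟨l, by exact_mod_cast (by linarith : (l.length : ℝ) ≤ 2 * B).trans (Nat.le_ceil _), rfl⟩

theorem normalOn_halfPlane : NormalOn 𝒮 halfPlane := by
  refine normalOn_of_finite_sublevels (fun h => (h 2).re) finite_setOf_re_apply_two_le
    fun M => ⟨6 * M + 2, fun h hh hB z hz => ?_⟩
  obtain ⟨l, rfl⟩ := exists_word hh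
  have h2 := (re_word_bounds l (z := 2) (by norm_num)).2
  have hz' := (re_word_bounds l hz.le).1
  norm_num at h2
  calc M ≤ (word l z).re := by linarith [show 1 < z.re from hz]
    _ ≤ ‖word l z‖ := Complex.re_le_norm _

theorem halfPlane_subset_fatouSet {h : ℂ → ℂ} (hh : h ∈ 𝒮) : halfPlane ⊆ fatouSet h :=
  fun _ hz => ⟨halfPlane, isOpen_halfPlane, hz,
    normalOn_halfPlane.mono (iteratesOf_subset_semigroupGen hh)⟩

end ShiftExp

end

open ShiftExp

theorem statement_1 :
    ∃ f g : ℂ → ℂ, TranscendentalEntire f ∧ TranscendentalEntire g ∧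
      ¬ IsTrivialSemigroup (semigroupGen {f, g}) ∧
      ∃ D : Set ℂ, IsPlaneDomain D ∧ SimplyConnectedSpace D ∧
        D ⊆ fatouSetOfFamily (semigroupGen {f, g}) ∧
        ∀ h : ℂ → ℂ, h ∈ semigroupGen {f, g} → LiesInPreperiodicComponent h D := by
  have hne : halfPlane.Nonempty := ⟨2, two_mem_halfPlane⟩
  have := convex_halfPlane.contractibleSpace hne
  refine ⟨shiftExp 1, shiftExp 2, transcendentalEntire_shiftExp 1, transcendentalEntire_shiftExp 2,
    not_isTrivialSemigroup_of_not_commute not_commute_shiftExp_one_two, halfPlane,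
    ⟨isOpen_halfPlane, hne, convex_halfPlane.isPreconnected⟩, inferInstance,
    fun z hz => ⟨halfPlane, isOpen_halfPlane, hz, normalOn_halfPlane⟩, fun h hh => ?_⟩
  exact liesInPreperiodicComponent_of_mapsTo (differentiable_of_mem hh).continuous
    (isOpenMap_of_mem hh) convex_halfPlane.isPreconnected hne (halfPlane_subset_fatouSet hh)
    (mapsTo_halfPlane hh)
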